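/- arXiv:1609.01582 — 7 statements merged into one kernel-verified Lean document; each statement's English description precedes it below -/
import Mathlib

section
/- Let g and h be non-negative submodular functions on subsets of a finite set S, with g non-decreasing with respect to set inclusion and h non-increasing with respect to set inclusion. Then the pointwise product g·h is submodular. -/
/-!
Assume `h y ≤ h x`. Bounding `h (x ⊓ y)` by submodularity of `h` (weighted by `g (x ⊓ y) ≥ 0`)
and `g (x ⊔ y)` by submodularity of `g` (weighted by `h y ≥ 0`), what remains are products of
increments of `g` and of `h` over nested pairs, whose signs are fixed by monotonicity.
-/

/-- On `Finset α`, `⊓` and `⊔` are `∩` and `∪`. -/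
def IsSubmodular {L : Type*} [Lattice L] (f : L → ℝ) : Prop :=
  ∀ x y, f (x ⊓ y) + f (x ⊔ y) ≤ f x + f y

theorem IsSubmodular.mul_of_monotone_of_antitone {L : Type*} [Lattice L] {g h : L → ℝ}
    (hg₀ : ∀ x, 0 ≤ g x) (hh₀ : ∀ x, 0 ≤ h x) (hg : IsSubmodular g) (hh : IsSubmodular h)
    (hg_mono : Monotone g) (hh_anti : Antitone h) :
    IsSubmodular (g * h) := by
  intro x y
  wlog hyx : h y ≤ h x generalizing x y
  · simpa only [inf_comm, sup_comm, add_comm] using this y x (le_of_not_ge hyx)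
  have hg_inf_sup : g (x ⊓ y) ≤ g (x ⊔ y) := hg_mono inf_le_sup
  have hg_inf_left : g (x ⊓ y) ≤ g x := hg_mono inf_le_left
  have hh_sup_right : h (x ⊔ y) ≤ h y := hh_anti le_sup_right
  simp only [Pi.mul_apply]
  calc g (x ⊓ y) * h (x ⊓ y) + g (x ⊔ y) * h (x ⊔ y)
      ≤ g (x ⊓ y) * (h x + h y - h (x ⊔ y)) + g (x ⊔ y) * h (x ⊔ y) := by
        gcongr
        · exact hg₀ _
        · linarith [hh x y]
    _ = g (x ⊓ y) * h x + g (x ⊓ y) * h y + (g (x ⊔ y) - g (x ⊓ y)) * h (x ⊔ y) := by ring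
    _ ≤ g (x ⊓ y) * h x + g (x ⊓ y) * h y + (g (x ⊔ y) - g (x ⊓ y)) * h y := by
        gcongr
    _ = g (x ⊓ y) * h x + g (x ⊔ y) * h y := by ring
    _ ≤ g (x ⊓ y) * h x + (g x + g y - g (x ⊓ y)) * h y := by
        gcongr
        · exact hh₀ _
        · linarith [hg x y]
    _ = g (x ⊓ y) * h x + (g x - g (x ⊓ y)) * h y + g y * h y := by ring
    _ ≤ g (x ⊓ y) * h x + (g x - g (x ⊓ y)) * h x + g y * h y := by
        gcongr
    _ = g x * h x + g y * h y := by ring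

theorem stmt_8_general {α : Type*} [DecidableEq α] (g h : Finset α → ℝ)
    (hg0 : ∀ Z, 0 ≤ g Z) (hh0 : ∀ Z, 0 ≤ h Z)
    (hgsub : ∀ X Y : Finset α, g (X ∩ Y) + g (X ∪ Y) ≤ g X + g Y)
    (hhsub : ∀ X Y : Finset α, h (X ∩ Y) + h (X ∪ Y) ≤ h X + h Y)
    (hgmono : ∀ X Y : Finset α, X ⊆ Y → g X ≤ g Y)
    (hhanti : ∀ X Y : Finset α, X ⊆ Y → h Y ≤ h X) :
    ∀ X Y : Finset α,
      g (X ∩ Y) * h (X ∩ Y) + g (X ∪ Y) * h (X ∪ Y) ≤ g X * h X + g Y * h Y :=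
  IsSubmodular.mul_of_monotone_of_antitone hg0 hh0 hgsub hhsub
    (fun X Y => hgmono X Y) (fun X Y => hhanti X Y)

/-- The product of a non-negative non-decreasing submodular function and a non-negative
non-increasing submodular function is submodular. -/
theorem stmt_8 {α : Type*} [Fintype α] [DecidableEq α] (g h : Finset α → ℝ)
    (hg0 : ∀ Z, 0 ≤ g Z) (hh0 : ∀ Z, 0 ≤ h Z)
    (hgsub : ∀ X Y : Finset α, g (X ∩ Y) + g (X ∪ Y) ≤ g X + g Y)
    (hhsub : ∀ X Y : Finset α, h (X ∩ Y) + h (X ∪ Y) ≤ h X + h Y)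
    (hgmono : ∀ X Y : Finset α, X ⊆ Y → g X ≤ g Y)
    (hhanti : ∀ X Y : Finset α, X ⊆ Y → h Y ≤ h X) :
    ∀ X Y : Finset α,
      g (X ∩ Y) * h (X ∩ Y) + g (X ∪ Y) * h (X ∪ Y) ≤ g X * h X + g Y * h Y :=
  stmt_8_general g h hg0 hh0 hgsub hhsub hgmono hhanti
end

section
/- Fix a positive integer n and finite sets X, Y ⊆ {1,...,T} with T ≤ n. Define b = |Xᶜ ∩ Y|, c = |X ∩ Yᶜ|, d = |X ∩ Y| (complements taken inside {1,...,T}), and f(X,Y) = (1 - b/n)(1 - c/n)·exp(-d/n). Then for each fixed X, the function Y ↦ f(X,Y) is submodular, and symmetrically for each fixed Y the function X ↦ f(X,Y) is submodular. -/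
/-!
Fix `Z`. Since `|Z ∩ Yᶜ| = |Z| - |Z ∩ Y|`, the function `Y ↦ f(Z, Y)` factors as
`(1 - |Zᶜ ∩ Y| / n) * φ(|Z ∩ Y|)` with `φ(x) = (1 - (|Z| - x) / n) * exp(-x / n)`.
The first factor is modular, antitone and nonnegative (as `T ≤ n`). On `x ≤ |Z|` the
derivative `φ' x = (|Z| - x) / n² * exp(-x / n)` is a product of nonnegative antitone
factors, so `φ` is monotone and concave there, and `φ(|Z ∩ Y|)` is monotone submodular.
Such a product is submodular. Submodularity in `X` follows because `f(X, Y)` is symmetric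
under swapping the roles of `X` and `Y`.
-/

open Finset Real

noncomputable def overlapWeight (N K x : ℝ) : ℝ := (1 - (K - x) / N) * exp (-x / N)

lemma hasDerivAt_overlapWeight {N : ℝ} (hN : N ≠ 0) (K x : ℝ) :
    HasDerivAt (overlapWeight N K) ((K - x) / N ^ 2 * exp (-x / N)) x := by
  have := ((((hasDerivAt_id x).const_sub K).div_const N).const_sub 1).mul
    (((hasDerivAt_id x).neg.div_const N).exp)
  exact this.congr_deriv (by simp only [id, Pi.neg_apply]; field_simp; ring)

lemma monotoneOn_overlapWeight {N : ℝ} (hN : N ≠ 0) (K : ℝ) :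
    MonotoneOn (overlapWeight N K) (Set.Iic K) := by
  have hd := hasDerivAt_overlapWeight hN K
  refine monotoneOn_of_hasDerivWithinAt_nonneg (convex_Iic K)
    (fun x _ => (hd x).continuousAt.continuousWithinAt) (fun x _ => (hd x).hasDerivWithinAt)
    fun x hx => ?_
  rw [interior_Iic] at hx
  have : 0 ≤ K - x := sub_nonneg.2 (le_of_lt hx)
  positivity

lemma concaveOn_overlapWeight {N : ℝ} (hN : 0 < N) (K : ℝ) :
    ConcaveOn ℝ (Set.Iic K) (overlapWeight N K) := by
  have hd := hasDerivAt_overlapWeight hN.ne' K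
  refine AntitoneOn.concaveOn_of_deriv (convex_Iic K)
    (fun x _ => (hd x).continuousAt.continuousWithinAt)
    (fun x _ => (hd x).differentiableAt.differentiableWithinAt) ?_
  rw [interior_Iic, funext fun x => (hd x).deriv]
  intro x hx y hy hxy
  have hy' : 0 ≤ K - y := sub_nonneg.2 (le_of_lt hy)
  exact mul_le_mul (by gcongr) (exp_le_exp.2 (by gcongr))
    (exp_nonneg _) (div_nonneg (by linarith) (sq_nonneg N))

lemma ConcaveOn.map_add_map_le_of_add_eq {s : Set ℝ} {φ : ℝ → ℝ} (hφ : ConcaveOn ℝ s φ)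
    {a b c d : ℝ} (ha : a ∈ s) (hd : d ∈ s) (hab : a ≤ b) (hac : a ≤ c) (h : a + d = b + c) :
    φ a + φ d ≤ φ b + φ c := by
  rcases hab.eq_or_lt with rfl | hab
  · obtain rfl : c = d := by linarith
    rfl
  have hda : 0 < d - a := by linarith
  set t := (b - a) / (d - a)
  have ht₀ : 0 ≤ t := by positivity
  have ht₁ : 0 ≤ 1 - t := by rw [sub_nonneg, div_le_one hda]; linarith
  have hb : (1 - t) • a + t • d = b := by simp only [smul_eq_mul, t]; field_simp; ring
  have hc : t • a + (1 - t) • d = c := by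
    rw [show c = a + d - b by linarith]; simp only [smul_eq_mul, t]; field_simp; ring
  have h₁ := hφ.2 ha hd ht₁ ht₀ (by ring)
  have h₂ := hφ.2 ha hd ht₀ ht₁ (by ring)
  rw [hb] at h₁
  rw [hc] at h₂
  simp only [smul_eq_mul] at h₁ h₂
  linarith

/-- Read at `A ∩ B, A, B, A ∪ B`: a nonnegative antitone modular set function times a monotone
submodular one is submodular. -/
lemma mul_add_mul_le_of_add_eq {g₀ g₁ g₂ g₃ h₀ h₁ h₂ h₃ : ℝ} (hg : g₀ + g₃ = g₁ + g₂)
    (hg₁ : g₁ ≤ g₀) (hg₂ : g₂ ≤ g₀) (hg₀ : 0 ≤ g₀) (hh₁ : h₁ ≤ h₃) (hh₂ : h₂ ≤ h₃)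
    (hh : h₀ + h₃ ≤ h₁ + h₂) :
    g₀ * h₀ + g₃ * h₃ ≤ g₁ * h₁ + g₂ * h₂ := by
  have := mul_nonneg hg₀ (sub_nonneg.2 hh)
  have := mul_nonneg (sub_nonneg.2 hg₁) (sub_nonneg.2 hh₁)
  have := mul_nonneg (sub_nonneg.2 hg₂) (sub_nonneg.2 hh₂)
  rw [show g₃ = g₁ + g₂ - g₀ by linarith]
  nlinarith

lemma card_inter_inter_add_card_inter_union {α : Type*} [DecidableEq α] (S A B : Finset α) :
    #(S ∩ (A ∩ B)) + #(S ∩ (A ∪ B)) = #(S ∩ A) + #(S ∩ B) := by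
  rw [inter_union_distrib_left, inter_inter_distrib_left, add_comm,
    card_union_add_card_inter]

section PairValue

variable {α : Type*} [Fintype α] [DecidableEq α]

noncomputable def pairValue (N : ℝ) (X Y : Finset α) : ℝ :=
  (1 - #(Xᶜ ∩ Y) / N) * (1 - #(X ∩ Yᶜ) / N) * exp (-(#(X ∩ Y) / N))

lemma pairValue_comm (N : ℝ) (X Y : Finset α) : pairValue N X Y = pairValue N Y X := by
  rw [pairValue, pairValue, inter_comm Xᶜ, inter_comm X Yᶜ, inter_comm X Y]
  ring

lemma pairValue_eq_mul_overlapWeight (N : ℝ) (X Y : Finset α) :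
    pairValue N X Y = (1 - #(Xᶜ ∩ Y) / N) * overlapWeight N #X #(X ∩ Y) := by
  have hsplit : (#(X ∩ Y) : ℝ) + #(X ∩ Yᶜ) = #X := by
    rw [← sdiff_eq_inter_compl, ← Nat.cast_add, card_inter_add_card_sdiff]
  rw [pairValue, overlapWeight, ← hsplit, neg_div, add_sub_cancel_left, mul_assoc]

theorem pairValue_submodular {N : ℝ} (hN : 0 < N) (hα : (Fintype.card α : ℝ) ≤ N)
    (Z A B : Finset α) :
    pairValue N Z (A ∩ B) + pairValue N Z (A ∪ B) ≤ pairValue N Z A + pairValue N Z B := by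
  simp only [pairValue_eq_mul_overlapWeight]
  have hmono := monotoneOn_overlapWeight hN.ne' (#Z : ℝ)
  have hsub {S C D : Finset α} (h : C ⊆ D) : (#(S ∩ C) : ℝ) ≤ #(S ∩ D) := by
    exact_mod_cast card_le_card (inter_subset_inter_left h)
  have hle {C : Finset α} : (#(Z ∩ C) : ℝ) ∈ Set.Iic (#Z : ℝ) :=
    Set.mem_Iic.2 (by exact_mod_cast card_le_card inter_subset_left)
  apply mul_add_mul_le_of_add_eq
  · have hb : (#(Zᶜ ∩ (A ∩ B)) : ℝ) + #(Zᶜ ∩ (A ∪ B)) = #(Zᶜ ∩ A) + #(Zᶜ ∩ B) := by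
      exact_mod_cast card_inter_inter_add_card_inter_union Zᶜ A B
    linear_combination (-1 / N) * hb
  · gcongr
    exact inter_subset_left
  · gcongr
    exact inter_subset_right
  · rw [sub_nonneg, div_le_one hN]
    exact (Nat.cast_le.2 (card_le_univ _)).trans hα
  · exact hmono hle hle (hsub subset_union_left)
  · exact hmono hle hle (hsub subset_union_right)
  · exact (concaveOn_overlapWeight hN _).map_add_map_le_of_add_eq hle hle
      (hsub inter_subset_left) (hsub inter_subset_right)
      (by exact_mod_cast card_inter_inter_add_card_inter_union Z A B)

end PairValue

/-- With `b = |Xᶜ ∩ Y|`, `c = |X ∩ Yᶜ|`, `d = |X ∩ Y|` (inside `{1,...,T}`, `T ≤ n`) and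
`f(X,Y) = (1 - b/n)(1 - c/n)exp(-d/n)`, the function `f` is submodular in each argument. -/
theorem stmt_9 (n T : ℕ) (hn : 0 < n) (hT : T ≤ n)
    (f : Finset (Fin T) → Finset (Fin T) → ℝ)
    (hf : ∀ X Y : Finset (Fin T),
      f X Y = (1 - ((Xᶜ ∩ Y).card : ℝ) / n) * (1 - ((X ∩ Yᶜ).card : ℝ) / n) *
        Real.exp (-(((X ∩ Y).card : ℝ) / n))) :
    (∀ X : Finset (Fin T), ∀ A B : Finset (Fin T),
      f X (A ∩ B) + f X (A ∪ B) ≤ f X A + f X B) ∧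
    (∀ Y : Finset (Fin T), ∀ A B : Finset (Fin T),
      f (A ∩ B) Y + f (A ∪ B) Y ≤ f A Y + f B Y) := by
  obtain rfl : f = pairValue n := funext₂ hf
  have hN : (0 : ℝ) < n := by exact_mod_cast hn
  have hcard : (Fintype.card (Fin T) : ℝ) ≤ n := by simpa using hT
  refine ⟨pairValue_submodular hN hcard, fun Y A B => ?_⟩
  simp only [pairValue_comm _ _ Y]
  exact pairValue_submodular hN hcard Y A B
end

section
/- The function g(t₁, t₂) = (1 - |t₁ - t₂|/n)·exp((max(t₁,t₂) - T)/n), defined for t₁, t₂ ∈ [0, T] with T ≤ n, is concave in each variable separately (holding the other fixed). -/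
/-!
Fix one variable `s`. Then `g(s, t) = exp((s - T)/n) · ψ((t - s)/n)` with
`ψ(u) = (1 - |u|)·exp(max u 0)`, and `ψ = min(1 + u, (1 - u)·eᵘ)` because `(1 - x)·eˣ ≤ 1 + x`
for `x ≥ 0`. The second branch has second derivative `-(1 + u)·eᵘ`, so `ψ` is concave on
`u ≥ -1`, which contains `(t - s)/n` for all `s, t ∈ [0, T] ⊆ [0, n]`.
-/

open Real Set

lemma one_sub_mul_exp_le_one_add {x : ℝ} (hx : 0 ≤ x) : (1 - x) * exp x ≤ 1 + x := by
  have h := mul_le_mul_of_nonneg_right (one_sub_le_exp_neg x) (exp_pos x).le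
  rw [← exp_add, neg_add_cancel, exp_zero] at h
  linarith

lemma concaveOn_one_sub_mul_exp : ConcaveOn ℝ (Ici (-1)) fun u => (1 - u) * exp u := by
  have hf' (u : ℝ) : HasDerivAt (fun u => (1 - u) * exp u) (-u * exp u) u :=
    (((hasDerivAt_id u).const_sub 1).mul (hasDerivAt_exp u)).congr_deriv
      (by simp only [neg_mul, one_mul, id_eq]; ring)
  have hf'' (u : ℝ) : HasDerivAt (fun u => -u * exp u) (-(1 + u) * exp u) u :=
    ((hasDerivAt_id u).neg.mul (hasDerivAt_exp u)).congr_deriv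
      (by simp only [neg_mul, one_mul, Pi.neg_apply, id_eq]; ring)
  refine concaveOn_of_hasDerivWithinAt2_nonpos (convex_Ici _)
    (fun u _ => (hf' u).continuousAt.continuousWithinAt)
    (fun u _ => (hf' u).hasDerivWithinAt) (fun u _ => (hf'' u).hasDerivWithinAt) ?_
  intro u hu
  rw [interior_Ici, mem_Ioi] at hu
  rw [neg_mul]
  exact neg_nonpos.2 (mul_nonneg (by linarith) (exp_pos u).le)

lemma min_one_add_one_sub_mul_exp (u : ℝ) :
    min (1 + u) ((1 - u) * exp u) = (1 - |u|) * exp (max u 0) := by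
  rcases le_total u 0 with hu | hu
  · have h := mul_le_mul_of_nonneg_right (one_sub_mul_exp_le_one_add (neg_nonneg.2 hu))
      (exp_pos u).le
    rw [mul_assoc, ← exp_add, neg_add_cancel, exp_zero, mul_one] at h
    rw [min_eq_left (by linarith), abs_of_nonpos hu, max_eq_right hu, exp_zero]
    ring
  · rw [min_eq_right (one_sub_mul_exp_le_one_add hu), abs_of_nonneg hu, max_eq_left hu]

lemma concaveOn_one_sub_abs_mul_exp_max :
    ConcaveOn ℝ (Ici (-1)) fun u : ℝ => (1 - |u|) * exp (max u 0) :=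
  (((concaveOn_const 1 (convex_Ici _)).add (concaveOn_id (convex_Ici _))).inf
    concaveOn_one_sub_mul_exp).congr fun u _ => min_one_add_one_sub_mul_exp u

lemma ConcaveOn.comp_sub_div {f : ℝ → ℝ} {s : Set ℝ} (hf : ConcaveOn ℝ s f) (a n : ℝ) :
    ConcaveOn ℝ ((fun t => (t - a) / n) ⁻¹' s) fun t => f ((t - a) / n) :=
  hf.comp_affineMap ⟨fun t => (t - a) / n, n⁻¹ • LinearMap.id, fun p v => by
    simp only [vadd_eq_add, LinearMap.smul_apply, LinearMap.id_coe, id_eq, smul_eq_mul]; ring⟩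

lemma one_sub_abs_sub_div_mul_exp_max_eq {n : ℝ} (hn : 0 < n) (T s t : ℝ) :
    (1 - |s - t| / n) * exp ((max s t - T) / n) =
      exp ((s - T) / n) * ((1 - |(t - s) / n|) * exp (max ((t - s) / n) 0)) := by
  have hmax : max ((t - s) / n) 0 = (max s t - s) / n := by
    rcases le_total s t with h | h
    · rw [max_eq_right h, max_eq_left (div_nonneg (by linarith) hn.le)]
    · rw [max_eq_left h, max_eq_right (div_nonpos_of_nonpos_of_nonneg (by linarith) hn.le)]
      simp
  rw [hmax, abs_div, abs_of_pos hn, abs_sub_comm, mul_left_comm, ← exp_add]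
  congr 2
  ring

lemma concaveOn_one_sub_abs_sub_div_mul_exp_max {n T s : ℝ} (hn : 0 < n) (hTn : T ≤ n)
    (hs : s ∈ Icc 0 T) :
    ConcaveOn ℝ (Icc 0 T) fun t => (1 - |s - t| / n) * exp ((max s t - T) / n) := by
  have hsub : Icc 0 T ⊆ (fun t => (t - s) / n) ⁻¹' Ici (-1) := fun t ht => by
    rw [mem_preimage, mem_Ici, le_div_iff₀ hn]
    linarith [ht.1, hs.2]
  exact ((concaveOn_one_sub_abs_mul_exp_max.comp_sub_div s n).smul (exp_pos ((s - T) / n)).le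
    |>.subset hsub (convex_Icc 0 T)).congr fun t _ =>
      (one_sub_abs_sub_div_mul_exp_max_eq hn T s t).symm

theorem stmt_11_general (n T : ℝ) (hn : 0 < n) (hTn : T ≤ n)
    (g : ℝ → ℝ → ℝ)
    (hg : ∀ t₁ t₂, g t₁ t₂ = (1 - |t₁ - t₂| / n) * Real.exp ((max t₁ t₂ - T) / n)) :
    (∀ t₁ ∈ Set.Icc (0 : ℝ) T, ConcaveOn ℝ (Set.Icc (0 : ℝ) T) (fun t₂ => g t₁ t₂)) ∧
    (∀ t₂ ∈ Set.Icc (0 : ℝ) T, ConcaveOn ℝ (Set.Icc (0 : ℝ) T) (fun t₁ => g t₁ t₂)) := by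
  constructor
  · intro t₁ ht₁
    simpa only [hg] using concaveOn_one_sub_abs_sub_div_mul_exp_max hn hTn ht₁
  · intro t₂ ht₂
    simpa only [hg, abs_sub_comm _ t₂, max_comm _ t₂] using
      concaveOn_one_sub_abs_sub_div_mul_exp_max hn hTn ht₂

/-- The function `g(t₁,t₂) = (1 - |t₁ - t₂|/n)·exp((max(t₁,t₂) - T)/n)` on `[0,T]²`,
with `T ≤ n`, is concave in each variable separately. -/
theorem stmt_11 (n T : ℝ) (hn : 0 < n) (hT : 0 < T) (hTn : T ≤ n)
    (g : ℝ → ℝ → ℝ)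
    (hg : ∀ t₁ t₂, g t₁ t₂ = (1 - |t₁ - t₂| / n) * Real.exp ((max t₁ t₂ - T) / n)) :
    (∀ t₁ ∈ Set.Icc (0 : ℝ) T, ConcaveOn ℝ (Set.Icc (0 : ℝ) T) (fun t₂ => g t₁ t₂)) ∧
    (∀ t₂ ∈ Set.Icc (0 : ℝ) T, ConcaveOn ℝ (Set.Icc (0 : ℝ) T) (fun t₁ => g t₁ t₂)) :=
  stmt_11_general n T hn hTn g hg
end

section
/- Let φ be a distribution on subsets of a finite set S that is supported on a chain (a family of sets totally ordered by inclusion) and has coordinatewise expectation x ∈ [0,1]^S, i.e., Pr_{Z∼φ}[s ∈ Z] = x(s) for each s. Then φ equals the Lovász extension distribution of x: sampling λ uniform in [0,1] and outputting {s : x(s) ≥ λ}. -/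
/-! On the support of a chain-supported measure the events `{Z | s ∈ Z}` are nested, so the
mass of the up-set `{Z | A ⊆ Z}` is the smallest marginal over `s ∈ A`. The Lovász
distribution is itself supported on a chain, the superlevel sets of `x`, and has marginals `x`;
hence both measures agree on all up-sets. These form a π-system generating the discrete
σ-algebra on `Finset α`, so the measures coincide. -/

open MeasureTheory

section Chain

variable {α : Type*} [Countable α] [MeasurableSpace (Finset α)] {μ : Measure (Finset α)}

lemma ae_mem_imp_mem_of_chain (hchain : ∀ A B : Finset α, μ {A} ≠ 0 → μ {B} ≠ 0 → A ⊆ B ∨ B ⊆ A)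
    {Z : Finset α} (hZ : μ {Z} ≠ 0) {s t : α} (hs : s ∈ Z) (ht : t ∉ Z) :
    ∀ᵐ W ∂μ, t ∈ W → s ∈ W := by
  refine ae_iff_of_countable.2 fun W hW htW => ?_
  rcases hchain Z W hZ hW with hZW | hWZ
  · exact hZW hs
  · exact absurd (hWZ htW) ht

variable [MeasurableSingletonClass (Finset α)] [IsFiniteMeasure μ]

lemma measure_setOf_subset_eq_inf'_of_chain
    (hchain : ∀ A B : Finset α, μ {A} ≠ 0 → μ {B} ≠ 0 → A ⊆ B ∨ B ⊆ A)
    (A : Finset α) (hA : A.Nonempty) :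
    μ {Z | A ⊆ Z} = A.inf' hA (fun s => μ {Z | s ∈ Z}) := by
  obtain ⟨s₀, hs₀, hmin⟩ := A.exists_min_image (fun s => μ {Z | s ∈ Z}) hA
  have hupset : {Z | A ⊆ Z} =ᵐ[μ] {Z | s₀ ∈ Z} := by
    refine ae_iff_of_countable.2 fun Z hZ => propext ⟨fun hAZ => hAZ hs₀, fun hs₀Z t ht => ?_⟩
    by_contra htZ
    -- `{t ∈ ·}` and the atom `Z` both lie a.e. in `{s₀ ∈ ·}`, whose mass is minimal.
    have hsplit : μ {W | t ∈ W} + μ {Z} ≤ μ {W | t ∈ W} := by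
      rw [← measure_union (Set.disjoint_singleton_right (a := Z).2 htZ) (measurableSet_singleton Z)]
      refine (measure_mono_ae ?_).trans (hmin t ht)
      filter_upwards [ae_mem_imp_mem_of_chain hchain hZ hs₀Z htZ] with W hW hWmem
      rcases hWmem with htW | rfl
      exacts [hW htW, hs₀Z]
    have hZ_le : μ {Z} ≤ 0 :=
      (ENNReal.add_le_add_iff_left (measure_ne_top μ _)).1 (by rwa [add_zero])
    exact hZ (nonpos_iff_eq_zero.1 hZ_le)
  rw [measure_congr hupset]
  exact le_antisymm (Finset.le_inf' hA _ hmin) (Finset.inf'_le _ hs₀)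

end Chain

section UpperSets

variable {α : Type*}

lemma isPiSystem_setOf_subset : IsPiSystem (Set.range fun A : Finset α => {Z | A ⊆ Z}) := by
  classical
  rintro _ ⟨A, rfl⟩ _ ⟨B, rfl⟩ -
  exact ⟨A ∪ B, by ext Z; simp [Finset.union_subset_iff]⟩

lemma singleton_eq_setOf_subset_diff [DecidableEq α] (A : Finset α) :
    ({A} : Set (Finset α)) = {Z | A ⊆ Z} \ ⋃ t ∈ (↑A : Set α)ᶜ, {Z | insert t A ⊆ Z} := by
  ext Z
  simp only [Set.mem_singleton_iff, Set.mem_sdiff, Set.mem_ofPred_eq, Set.mem_iUnion,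
    Set.mem_compl_iff, Finset.mem_coe, Finset.insert_subset_iff, exists_prop, not_exists, not_and]
  constructor
  · rintro rfl
    exact ⟨subset_rfl, fun t ht htA _ => ht htA⟩
  · rintro ⟨hAZ, hmax⟩
    exact (Finset.Subset.antisymm hAZ fun t htZ => by_contra fun ht => hmax t ht htZ hAZ).symm

variable [Countable α] [MeasurableSpace (Finset α)] [MeasurableSingletonClass (Finset α)]

lemma generateFrom_setOf_subset :
    MeasurableSpace.generateFrom (Set.range fun A : Finset α => {Z | A ⊆ Z}) = ‹_› := by
  classical
  refine le_antisymm (MeasurableSpace.generateFrom_le fun _ _ => .of_discrete) fun s _ => ?_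
  have hgen (A : Finset α) :
      MeasurableSet[.generateFrom (Set.range fun A : Finset α => {Z | A ⊆ Z})] {Z | A ⊆ Z} :=
    .basic _ ⟨A, rfl⟩
  rw [← Set.biUnion_of_singleton s]
  refine .biUnion s.to_countable fun A _ => ?_
  rw [singleton_eq_setOf_subset_diff]
  exact (hgen A).diff (.biUnion (Set.to_countable _) fun t _ => hgen _)

theorem Measure.ext_of_setOf_subset {μ ν : Measure (Finset α)} [IsFiniteMeasure μ]
    (h : ∀ A, μ {Z | A ⊆ Z} = ν {Z | A ⊆ Z}) : μ = ν := by
  refine ext_of_generate_finite _ generateFrom_setOf_subset.symm isPiSystem_setOf_subset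
    (by rintro _ ⟨A, rfl⟩; exact h A) ?_
  simpa using h ∅

end UpperSets

section Lovasz

variable {α : Type*} [Fintype α]

noncomputable def superlevelFinset (x : α → ℝ) (lam : ℝ) : Finset α :=
  Finset.univ.filter fun s => lam ≤ x s

noncomputable def lovaszDistribution [MeasurableSpace (Finset α)] (x : α → ℝ) :
    Measure (Finset α) :=
  (volume.restrict (Set.Icc (0 : ℝ) 1)).map (superlevelFinset x)

lemma antitone_superlevelFinset (x : α → ℝ) : Antitone (superlevelFinset x) :=
  fun _ _ hab => Finset.monotone_filter_right _ fun _ _ => hab.trans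

variable [MeasurableSpace (Finset α)] (x : α → ℝ)

lemma measurable_superlevelFinset : Measurable (superlevelFinset x) :=
  measurable_to_countable' fun _ =>
    (Set.ordConnected_singleton.preimage_anti (antitone_superlevelFinset x)).measurableSet

instance : IsProbabilityMeasure (lovaszDistribution x) :=
  have : IsProbabilityMeasure (volume.restrict (Set.Icc (0 : ℝ) 1)) :=
    ⟨by simp [Real.volume_Icc]⟩
  Measure.isProbabilityMeasure_map (measurable_superlevelFinset x).aemeasurable

variable [MeasurableSingletonClass (Finset α)]

lemma lovaszDistribution_isChain (A B : Finset α) (hA : lovaszDistribution x {A} ≠ 0)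
    (hB : lovaszDistribution x {B} ≠ 0) : A ⊆ B ∨ B ⊆ A := by
  have mem_range {C : Finset α} (hC : lovaszDistribution x {C} ≠ 0) :
      ∃ lam, superlevelFinset x lam = C := by
    rw [lovaszDistribution, Measure.map_apply (measurable_superlevelFinset x)
      (measurableSet_singleton C)] at hC
    exact nonempty_of_measure_ne_zero hC
  obtain ⟨a, rfl⟩ := mem_range hA
  obtain ⟨b, rfl⟩ := mem_range hB
  exact ((le_total a b).imp (fun hab => antitone_superlevelFinset x hab)
    (fun hba => antitone_superlevelFinset x hba)).symm

lemma lovaszDistribution_setOf_mem {s : α} (hs : x s ∈ Set.Icc (0 : ℝ) 1) :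
    lovaszDistribution x {Z | s ∈ Z} = ENNReal.ofReal (x s) := by
  have hpre : superlevelFinset x ⁻¹' {Z | s ∈ Z} ∩ Set.Icc 0 1 = Set.Icc 0 (x s) := by
    ext lam
    simp only [superlevelFinset, Set.mem_inter_iff, Set.mem_preimage, Set.mem_ofPred_eq,
      Finset.mem_filter_univ, Set.mem_Icc]
    constructor
    · rintro ⟨hlam, h0, -⟩; exact ⟨h0, hlam⟩
    · rintro ⟨h0, hlam⟩; exact ⟨hlam, h0, hlam.trans hs.2⟩
  rw [lovaszDistribution, Measure.map_apply (measurable_superlevelFinset x) .of_discrete,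
    Measure.restrict_apply (measurable_superlevelFinset x .of_discrete), hpre, Real.volume_Icc,
    sub_zero]

end Lovasz

theorem stmt_13_general {α : Type*} [Fintype α] [MeasurableSpace (Finset α)]
    [MeasurableSingletonClass (Finset α)]
    (φ : Measure (Finset α)) [IsProbabilityMeasure φ]
    (x : α → ℝ) (hx : ∀ s, x s ∈ Set.Icc (0 : ℝ) 1)
    (hchain : ∀ A B : Finset α, φ {A} ≠ 0 → φ {B} ≠ 0 → A ⊆ B ∨ B ⊆ A)
    (hmarg : ∀ s : α, φ {Z | s ∈ Z} = ENNReal.ofReal (x s)) :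
    φ = Measure.map (fun lam : ℝ => Finset.univ.filter (fun s => lam ≤ x s))
          (volume.restrict (Set.Icc (0 : ℝ) 1)) := by
  change φ = lovaszDistribution x
  refine Measure.ext_of_setOf_subset fun A => ?_
  rcases A.eq_empty_or_nonempty with rfl | hA
  · simp
  · rw [measure_setOf_subset_eq_inf'_of_chain hchain A hA,
      measure_setOf_subset_eq_inf'_of_chain (lovaszDistribution_isChain x) A hA]
    simp only [hmarg, lovaszDistribution_setOf_mem x (hx _)]

/-- A distribution on subsets of a finite set that is supported on a chain and has
coordinatewise marginals `x ∈ [0,1]^S` must equal the Lovász-extension distribution of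
`x`: sample `λ` uniformly in `[0,1]` and output the superlevel set `{s : x(s) ≥ λ}`. -/
theorem stmt_13 {α : Type*} [Fintype α] [DecidableEq α] [MeasurableSpace (Finset α)]
    [MeasurableSingletonClass (Finset α)]
    (φ : Measure (Finset α)) [IsProbabilityMeasure φ]
    (x : α → ℝ) (hx : ∀ s, x s ∈ Set.Icc (0 : ℝ) 1)
    (hchain : ∀ A B : Finset α, φ {A} ≠ 0 → φ {B} ≠ 0 → A ⊆ B ∨ B ⊆ A)
    (hmarg : ∀ s : α, φ {Z | s ∈ Z} = ENNReal.ofReal (x s)) :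
    φ = Measure.map (fun lam : ℝ => Finset.univ.filter (fun s => lam ≤ x s))
          (volume.restrict (Set.Icc (0 : ℝ) 1)) :=
  stmt_13_general φ x hx hchain hmarg
end

section
/- For n = 2^d there exists a rendezvous code of length T = 4n and size d + 2: that is, a family R of d+2 sequences in {0, 1, ..., n}^T such that for every ordered pair of distinct sequences x, y ∈ R, there exists a set of n time steps on which x takes each value in {1, ..., n} exactly once while y takes the value 0 (its repeated label) at each of those steps, where 0 occurs at least n times in y. -/
/-!
Identify the `4n = 2^(d+2)` time steps with `𝔽₂^(d+2)`, one coordinate per schedule. Schedule `a`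
waits at `t` when `t a = 0`, and otherwise shows the class of `t` modulo the span of `e_a` and of the
all-ones vector; this quotient has `2^d` elements. For `b ≠ a` the steps with `t a = 1`, `t b = 0`
form an affine space of dimension `d` whose direction `{t a = t b = 0}` meets that span only in `0`,
so `a` shows every label exactly once there while `b` waits.
-/

open Finset

def IsRendezvousCode {ι τ : Type*} [Fintype τ] (n : ℕ) (R : ι → τ → ℕ) : Prop :=
  (∀ a t, R a t ≤ n) ∧
    ∀ a b : ι, a ≠ b →
      n ≤ (univ.filter (fun t => R b t = 0)).card ∧
      ∃ S : Finset τ, S.card = n ∧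
        (∀ t ∈ S, R b t = 0) ∧
        (∀ v : ℕ, 1 ≤ v → v ≤ n → (S.filter (fun t => R a t = v)).card = 1)

section

variable {ι τ : Type*} {n : ℕ} (Z : ι → τ → Prop) [∀ a, DecidablePred (Z a)] (ℓ : ι → τ → Fin n)

def scheduleOfLabels (a : ι) (t : τ) : ℕ := if Z a t then 0 else ℓ a t + 1

theorem isRendezvousCode_scheduleOfLabels [Fintype τ]
    (hℓ : ∀ a b, a ≠ b → Set.BijOn (ℓ a) {t | ¬ Z a t ∧ Z b t} Set.univ) :
    IsRendezvousCode n (scheduleOfLabels Z ℓ) := by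
  refine ⟨fun a t => ?_, fun a b hab => ?_⟩
  · unfold scheduleOfLabels
    split_ifs
    exacts [Nat.zero_le _, (ℓ a t).isLt]
  set S := univ.filter (fun t => ¬ Z a t ∧ Z b t) with hS
  have hbij : Set.BijOn (ℓ a) S Set.univ := by simpa [hS] using hℓ a b hab
  have hcard : S.card = n := by
    simpa using Finset.card_nbij (t := univ) (ℓ a) (fun _ _ => mem_univ _) hbij.injOn
      (by simpa using hbij.surjOn)
  have hzero : ∀ t ∈ S, scheduleOfLabels Z ℓ b t = 0 := fun t ht =>
    if_pos (mem_filter.mp ht).2.2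
  refine ⟨?_, S, hcard, hzero, fun v hv₁ hv₂ => card_eq_one.mpr ?_⟩
  · exact hcard.ge.trans (card_le_card fun t ht => mem_filter.mpr ⟨mem_univ _, hzero t ht⟩)
  · have hval : ∀ t ∈ S, scheduleOfLabels Z ℓ a t = ℓ a t + 1 := fun t ht =>
      if_neg (mem_filter.mp ht).2.1
    obtain ⟨t, ht, hℓt⟩ := hbij.surjOn (Set.mem_univ (⟨v - 1, by omega⟩ : Fin n))
    refine ⟨t, eq_singleton_iff_unique_mem.mpr ⟨?_, fun t' ht' => ?_⟩⟩
    · rw [mem_filter, hval t ht, hℓt]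
      exact ⟨ht, by simp; omega⟩
    · rw [mem_filter, hval t' ht'.1] at ht'
      refine hbij.injOn ht'.1 ht (Fin.ext ?_)
      rw [hℓt]
      simp only
      omega

end

/-- The class of `s` modulo the all-ones vector, represented by the vector vanishing at `0`, with
the last coordinate dropped; precomposing with `swap a (last _)` gives schedule `a`'s label. -/
def middleMinusHead {d : ℕ} (s : Fin (d + 2) → Fin 2) : Fin d → Fin 2 :=
  fun k => s k.castSucc.succ + s 0

theorem bijOn_middleMinusHead {d : ℕ} (j : Fin (d + 1)) :
    Set.BijOn middleMinusHead {s : Fin (d + 2) → Fin 2 | s (Fin.last _) ≠ 0 ∧ s j.castSucc = 0}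
      Set.univ := by
  have add_self : ∀ x : Fin 2, x + x = 0 := by decide
  let head (w : Fin d → Fin 2) : Fin 2 := (Fin.cons 0 w : Fin (d + 1) → Fin 2) j
  let g (w : Fin d → Fin 2) : Fin (d + 2) → Fin 2 :=
    Fin.cons (head w) (Fin.snoc (fun k => w k + head w) 1 : Fin (d + 1) → Fin 2)
  refine Set.InvOn.bijOn (f' := g) ⟨fun s ⟨hlast, hj⟩ => ?_, fun w _ => ?_⟩
    (Set.mapsTo_univ _ _) fun w _ => ⟨?_, ?_⟩
  · have hhead : head (middleMinusHead s) = s 0 := by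
      cases j using Fin.cases with
      | zero => simpa [head] using hj.symm
      | succ i => simp_all [head, middleMinusHead]
    funext c
    cases c using Fin.cases with
    | zero => simpa [g] using hhead
    | succ c =>
      cases c using Fin.lastCases with
      | last =>
        rw [Fin.succ_last]
        simpa [g] using (Fin.eq_one_of_ne_zero _ hlast).symm
      | cast k => simp [g, hhead, middleMinusHead, add_assoc, add_self]
  · funext k
    simp [middleMinusHead, g, add_assoc, add_self]
  · simp [g, ← Fin.succ_last]
  · cases j using Fin.cases with
    | zero => simp [g, head]
    | succ i => simp [g, head, add_self]

theorem bijOn_middleMinusHead_comp_swap {d : ℕ} {a b : Fin (d + 2)} (hab : a ≠ b) :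
    Set.BijOn (fun t : Fin (d + 2) → Fin 2 => middleMinusHead (t ∘ Equiv.swap a (Fin.last _)))
      {t | t a ≠ 0 ∧ t b = 0} Set.univ := by
  obtain ⟨j, hj⟩ : ∃ j : Fin (d + 1), j.castSucc = Equiv.swap a (Fin.last _) b := by
    refine Fin.exists_castSucc_eq.mpr fun h => hab ?_
    simpa using congrArg (Equiv.swap a (Fin.last _)) h.symm
  refine (bijOn_middleMinusHead j).comp
    (Equiv.bijOn ((Equiv.swap a (Fin.last _)).arrowCongr (Equiv.refl _)) fun t => ?_)
  simp [Equiv.arrowCongr_apply, hj]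

/-- For `n = 2^d` there is a rendezvous code of length `T = 4n` and size `d + 2`:
a family `R` of `d+2` walk schedules over labels `{0,...,n}` such that for every ordered
pair of distinct schedules `x = R a`, `y = R b`, the label `0` occurs at least `n` times
in `y`, and there is a set `S` of `n` steps on which `y` is always `0` while `x` takes
each label `1,...,n` exactly once. -/
theorem stmt_15 (d : ℕ) :
    ∃ R : Fin (d + 2) → Fin (4 * 2 ^ d) → ℕ,
      (∀ a t, R a t ≤ 2 ^ d) ∧
      ∀ a b : Fin (d + 2), a ≠ b →
        2 ^ d ≤ (Finset.univ.filter (fun t => R b t = 0)).card ∧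
        ∃ S : Finset (Fin (4 * 2 ^ d)), S.card = 2 ^ d ∧
          (∀ t ∈ S, R b t = 0) ∧
          (∀ v : ℕ, 1 ≤ v → v ≤ 2 ^ d → (S.filter (fun t => R a t = v)).card = 1) := by
  let e : Fin (4 * 2 ^ d) ≃ (Fin (d + 2) → Fin 2) :=
    (finCongr (by ring)).trans finFunctionFinEquiv.symm
  refine ⟨_, isRendezvousCode_scheduleOfLabels (fun a t => e t a = 0)
    (fun a t => finFunctionFinEquiv (middleMinusHead (e t ∘ Equiv.swap a (Fin.last _))))
    fun a b hab => ?_⟩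
  exact (finFunctionFinEquiv.bijective.bijOn_univ).comp (bijOn_middleMinusHead_comp_swap hab) |>.comp
    (e.bijOn fun t => Iff.rfl)
end

section
/- For T ≤ n, the function θ ↦ θ² + 2θ(1-θ)(1 - T/n) + (1-θ)²·e^{-T/n} on [0,1] attains its minimum at θ* = (1 - (1 - T/n)e^{T/n}) / (1 - (1 - 2T/n)e^{T/n}), and the minimum value is (1 - (1 - T/n)²·e^{T/n}) / (1 - (1 - 2T/n)·e^{T/n}). -/
/-!
Writing `N = 1 - (1 - x)eˣ` and `D = 1 - (1 - 2x)eˣ` with `x = T/n`, the failure probability is the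
quadratic `e⁻ˣ (D θ² - 2Nθ + 1)`, so completing the square gives minimiser `N/D`. From `1 - x < e⁻ˣ`
we get `N > 0`, and `D = N + x eˣ > N`, hence `N/D ∈ (0, 1)`.
-/

open Real

lemma one_sub_mul_exp_lt_one {x : ℝ} (hx : x ≠ 0) : (1 - x) * exp x < 1 := by
  have h := add_one_lt_exp (neg_ne_zero.2 hx)
  calc (1 - x) * exp x < exp (-x) * exp x := mul_lt_mul_of_pos_right (by linarith) (exp_pos x)
    _ = 1 := by rw [← exp_add, neg_add_cancel, exp_zero]

noncomputable def biasNum (x : ℝ) : ℝ := 1 - (1 - x) * exp x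

noncomputable def biasDen (x : ℝ) : ℝ := 1 - (1 - 2 * x) * exp x

lemma biasNum_pos {x : ℝ} (hx : x ≠ 0) : 0 < biasNum x := by
  have := one_sub_mul_exp_lt_one hx
  unfold biasNum
  linarith

lemma biasDen_eq_biasNum_add (x : ℝ) : biasDen x = biasNum x + x * exp x := by
  unfold biasDen biasNum
  ring

lemma biasNum_lt_biasDen {x : ℝ} (hx : 0 < x) : biasNum x < biasDen x := by
  rw [biasDen_eq_biasNum_add]
  linarith [mul_pos hx (exp_pos x)]

lemma failure_eq_min_add_sq {x : ℝ} (hD : biasDen x ≠ 0) (θ : ℝ) :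
    θ ^ 2 + 2 * θ * (1 - θ) * (1 - x) + (1 - θ) ^ 2 * exp (-x)
      = (1 - (1 - x) ^ 2 * exp x) / biasDen x
        + exp (-x) * biasDen x * (θ - biasNum x / biasDen x) ^ 2 := by
  unfold biasDen biasNum at *
  have hD' : 1 - exp x * (1 - 2 * x) ≠ 0 := by rwa [mul_comm]
  rw [exp_neg]
  field_simp
  ring

theorem stmt_17_general (n T : ℝ) (hn : 0 < n) (hT : 0 < T)
    (F : ℝ → ℝ)
    (hF : ∀ θ : ℝ, F θ =
      θ ^ 2 + 2 * θ * (1 - θ) * (1 - T / n) + (1 - θ) ^ 2 * Real.exp (-(T / n)))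
    (θs : ℝ)
    (hθs : θs = (1 - (1 - T / n) * Real.exp (T / n)) /
                (1 - (1 - 2 * T / n) * Real.exp (T / n))) :
    θs ∈ Set.Icc (0 : ℝ) 1 ∧
    (∀ θ ∈ Set.Icc (0 : ℝ) 1, F θs ≤ F θ) ∧
    F θs = (1 - (1 - T / n) ^ 2 * Real.exp (T / n)) /
           (1 - (1 - 2 * T / n) * Real.exp (T / n)) := by
  set x := T / n
  have hx : 0 < x := div_pos hT hn
  have h2x : 2 * T / n = 2 * x := mul_div_assoc 2 T n
  rw [h2x] at hθs ⊢
  change θs = biasNum x / biasDen x at hθs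
  have hN := biasNum_pos hx.ne'
  have hND := biasNum_lt_biasDen hx
  have hD : 0 < biasDen x := hN.trans hND
  have hFθ (θ : ℝ) := (hF θ).trans (failure_eq_min_add_sq hD.ne' θ)
  have hFθs : F θs = (1 - (1 - x) ^ 2 * exp x) / biasDen x := by simp [hFθ, hθs]
  refine ⟨⟨?_, ?_⟩, fun θ _ => ?_, hFθs⟩
  · rw [hθs]; positivity
  · rw [hθs, div_le_one hD]; exact hND.le
  · rw [hFθs, hFθ θ, ← hθs]
    have : 0 ≤ exp (-x) * biasDen x * (θ - θs) ^ 2 := by positivity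
    linarith

/-- For `T ≤ n`, the Anderson-Weber failure probability
`θ ↦ θ² + 2θ(1-θ)(1 - T/n) + (1-θ)²e^{-T/n}` on `[0,1]` attains its minimum at
`θ* = (1 - (1 - T/n)e^{T/n})/(1 - (1 - 2T/n)e^{T/n})`, with minimum value
`(1 - (1 - T/n)²e^{T/n})/(1 - (1 - 2T/n)e^{T/n})`. -/
theorem stmt_17 (n T : ℝ) (hn : 0 < n) (hT : 0 < T) (hTn : T ≤ n)
    (F : ℝ → ℝ)
    (hF : ∀ θ : ℝ, F θ =
      θ ^ 2 + 2 * θ * (1 - θ) * (1 - T / n) + (1 - θ) ^ 2 * Real.exp (-(T / n)))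
    (θs : ℝ)
    (hθs : θs = (1 - (1 - T / n) * Real.exp (T / n)) /
                (1 - (1 - 2 * T / n) * Real.exp (T / n))) :
    θs ∈ Set.Icc (0 : ℝ) 1 ∧
    (∀ θ ∈ Set.Icc (0 : ℝ) 1, F θs ≤ F θ) ∧
    F θs = (1 - (1 - T / n) ^ 2 * Real.exp (T / n)) /
           (1 - (1 - 2 * T / n) * Real.exp (T / n)) :=
  stmt_17_general n T hn hT F hF θs hθs
end

section
/- Let n = 6m and let (v₀, v₁, ..., v_T) be a walk on the cycle ℤ/nℤ, meaning each v_{t+1} - v_t ∈ {-1, 0, 1} (mod n). Then the stroboscopic sequence (⌊v₀/m⌋, ⌊v_m/m⌋, ⌊v_{2m}/m⌋, ..., ⌊v_T/m⌋), with each vertex represented by its residue in {0,...,n-1}, is a walk on the cycle ℤ/6ℤ: consecutive terms differ by an element of {-1, 0, 1} modulo 6. -/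
/-!
After `m` steps a walk on `ℤ/(6m)ℤ` has moved by an integer `d` with `|d| ≤ m`. Lifting to `ℤ`,
the end point is `a + d + 6m·j` for the start point `a ∈ [0, 6m)`, so its sector is
`⌊(a + d)/m⌋ + 6j`; and since `|d| ≤ m`, monotonicity of `⌊·/m⌋` puts `⌊(a + d)/m⌋` within one
of `⌊a/m⌋`.
-/

lemma Int.ediv_add_sub_ediv_mem_Icc {m : ℤ} (hm : 0 < m) (a : ℤ) {d : ℤ} (hd : |d| ≤ m) :
    (a + d) / m - a / m ∈ Set.Icc (-1) 1 := by
  obtain ⟨hd₁, hd₂⟩ := abs_le.mp hd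
  have lower : a / m - 1 ≤ (a + d) / m := by
    calc a / m - 1 = (a + -1 * m) / m := (Int.add_mul_ediv_right _ _ hm.ne').symm
      _ ≤ (a + d) / m := Int.ediv_le_ediv hm (by linarith)
  have upper : (a + d) / m ≤ a / m + 1 := by
    calc (a + d) / m ≤ (a + 1 * m) / m := Int.ediv_le_ediv hm (by linarith)
      _ = a / m + 1 := Int.add_mul_ediv_right _ _ hm.ne'
  constructor <;> linarith

lemma exists_eq_add_intCast_of_forall_sub_mem {R : Type*} [AddCommGroupWithOne R] (v : ℕ → R) (t : ℕ)
    (hstep : ∀ s < t, v (s + 1) - v s ∈ ({-1, 0, 1} : Set R)) :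
    ∃ d : ℤ, |d| ≤ t ∧ v t = v 0 + d := by
  induction t with
  | zero => exact ⟨0, by simp⟩
  | succ t ih =>
    obtain ⟨d, hd, hv⟩ := ih fun s hs => hstep s (by omega)
    obtain ⟨e, he, hve⟩ : ∃ e : ℤ, |e| ≤ 1 ∧ v (t + 1) = v t + e := by
      have h := hstep t (by omega)
      simp only [Set.mem_insert_iff, Set.mem_singleton_iff] at h
      rcases h with h | h | h
      · exact ⟨-1, by norm_num, by rw [Int.cast_neg, Int.cast_one, ← h, add_sub_cancel]⟩
      · exact ⟨0, by norm_num, by rw [Int.cast_zero, add_zero, ← sub_eq_zero, h]⟩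
      · exact ⟨1, by norm_num, by rw [Int.cast_one, ← h, add_sub_cancel]⟩
    refine ⟨d + e, ?_, by rw [hve, hv, Int.cast_add, add_assoc]⟩
    calc |d + e| ≤ |d| + |e| := abs_add_le d e
      _ ≤ t + 1 := by linarith

lemma ZMod.natCast_val_add_div_sub_mem (k m : ℕ) [NeZero k] [NeZero m] (x : ZMod (k * m))
    {d : ℤ} (hd : |d| ≤ m) :
    ((((x + d).val / m : ℕ) : ZMod k) - ((x.val / m : ℕ) : ZMod k))
      ∈ ({-1, 0, 1} : Set (ZMod k)) := by
  have hm : (0 : ℤ) < m := by exact_mod_cast Nat.pos_of_ne_zero (NeZero.ne m)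
  obtain ⟨j, hj⟩ : ((k * m : ℕ) : ℤ) ∣ (x + d).val - (x.val + d) := by
    rw [← ZMod.intCast_zmod_eq_zero_iff_dvd]
    push_cast
    rw [ZMod.natCast_zmod_val, ZMod.natCast_zmod_val, sub_self]
  have lift : (((x + d).val : ℤ) / m) = (x.val + d) / m + k * j := by
    rw [show ((x + d).val : ℤ) = x.val + d + (k * j) * m by push_cast at hj; linear_combination hj,
      Int.add_mul_ediv_right _ _ hm.ne']
  obtain ⟨h₁, h₂⟩ := Int.ediv_add_sub_ediv_mem_Icc hm (x.val : ℤ) hd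
  have key : ((((x + d).val / m : ℕ) : ZMod k) - ((x.val / m : ℕ) : ZMod k))
      = (((x.val + d) / m - x.val / m : ℤ) : ZMod k) := by
    rw [← Int.cast_natCast, ← Int.cast_natCast (R := ZMod k) (x.val / m), Int.natCast_div,
      Int.natCast_div, lift]
    push_cast
    rw [ZMod.natCast_self]
    ring
  rw [key]
  generalize (x.val + d) / m - x.val / m = e at h₁ h₂
  interval_cases e <;> simp

/-- Dividing the `n`-cycle (`n = 6m`) into six sectors of size `m` and observing a walk
stroboscopically every `m` steps yields a walk on the `6`-cycle: consecutive sector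
indices differ by `-1`, `0`, or `1` mod 6. -/
theorem stmt_19 (m L : ℕ) (hm : 0 < m) (v : ℕ → ZMod (6 * m))
    (hwalk : ∀ t < L * m, v (t + 1) - v t ∈ ({-1, 0, 1} : Set (ZMod (6 * m)))) :
    ∀ k < L,
      ((((v ((k + 1) * m)).val / m : ℕ) : ZMod 6) - (((v (k * m)).val / m : ℕ) : ZMod 6))
        ∈ ({-1, 0, 1} : Set (ZMod 6)) := by
  intro k hk
  have : NeZero m := ⟨hm.ne'⟩
  obtain ⟨d, hd, hv⟩ := exists_eq_add_intCast_of_forall_sub_mem (fun s => v (k * m + s)) m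
    fun s hs => hwalk (k * m + s) (by nlinarith)
  rw [add_one_mul, hv]
  exact ZMod.natCast_val_add_div_sub_mem 6 m _ hd
end
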